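/- arXiv:1409.0098 — 7 statements merged into one kernel-verified Lean document; each statement's English description precedes it below -/
import Mathlib

section
/- Let V be a nonempty finite set (of vertices), A an arbitrary type (of points), d : V × A → ℝ a nonnegative function (distances from vertices to points), w : V → ℝ a nonnegative weight function, and ρ ∈ [0, 1). Suppose c ∈ A is the unique minimizer of the eccentricity ε, i.e., ε(c) < ε(a) for every a ∈ A with a ≠ c. If (b₁, b₂) ∈ A × A minimizes ψ over A × A (that is, ψ(b₁, b₂) ≤ ψ(a₁, a₂) for all a₁, a₂ ∈ A) and b₁ = b₂, then b₁ = c. -/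
open Finset

open scoped Classical in
/-- If a minimizer `(b₁, b₂)` of the weighted backup 2-center objective `ψ`
has `b₁ = b₂`, then this common point is the (unique) weighted center `c`. -/
theorem backup2center_identical_is_center
    {V : Type*} [Fintype V] [Nonempty V] {A : Type*}
    (d : V × A → ℝ) (hd : ∀ p, 0 ≤ d p)
    (w : V → ℝ) (hw : ∀ v, 0 ≤ w v)
    (ρ : ℝ) (hρ0 : 0 ≤ ρ) (hρ1 : ρ < 1)
    (ε : A → ℝ)
    (hε : ∀ a, ε a = (univ : Finset V).sup' univ_nonempty (fun v => w v * d (v, a)))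
    (εU : A → Finset V → ℝ)
    (hεU : ∀ a U, εU a U = U.fold max 0 (fun v => w v * d (v, a)))
    (ψ : A → A → ℝ)
    (hψ : ∀ a₁ a₂, ψ a₁ a₂ =
      (1 - ρ) * max (εU a₁ (univ.filter (fun v => d (v, a₁) ≤ d (v, a₂))))
                    (εU a₂ (univ.filter (fun v => ¬ d (v, a₁) ≤ d (v, a₂))))
      + ρ * (ε a₁ + ε a₂))
    (c : A) (hc : ∀ a, a ≠ c → ε c < ε a)
    (b₁ b₂ : A) (hb : ∀ a₁ a₂ : A, ψ b₁ b₂ ≤ ψ a₁ a₂)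
    (hbeq : b₁ = b₂) :
    b₁ = c := by
  -- ε is nonnegative
  have hε0 : ∀ a, 0 ≤ ε a := by
    intro a
    rw [hε a]
    obtain ⟨v⟩ := ‹Nonempty V›
    exact le_trans (mul_nonneg (hw v) (hd _))
      (Finset.le_sup' (fun v => w v * d (v, a)) (mem_univ v))
  -- εU on the full set equals ε
  have hfull : ∀ a : A, εU a (univ : Finset V) = ε a := by
    intro a
    rw [hεU, hε]
    apply le_antisymm
    · apply (Finset.fold_max_le _).2
      constructor
      · obtain ⟨v⟩ := ‹Nonempty V›
        exact le_trans (mul_nonneg (hw v) (hd _))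
          (Finset.le_sup' (fun v => w v * d (v, a)) (mem_univ v))
      · intro v _
        exact Finset.le_sup' (fun v => w v * d (v, a)) (mem_univ v)
    · apply Finset.sup'_le
      intro v _
      exact (Finset.le_fold_max _).2 (Or.inr ⟨v, mem_univ v, le_refl _⟩)
  -- ψ on the diagonal
  have hdiag : ∀ a : A, ψ a a = (1 + ρ) * ε a := by
    intro a
    rw [hψ a a]
    have h1 : (univ.filter (fun v : V => d (v, a) ≤ d (v, a))) = univ := by
      apply Finset.filter_true_of_mem; intro v _; exact le_refl _
    have h2 : (univ.filter (fun v : V => ¬ d (v, a) ≤ d (v, a))) = ∅ := by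
      apply Finset.filter_false_of_mem; intro v _; simp
    rw [h1, h2, hfull, hεU]
    simp only [Finset.fold_empty]
    rw [max_eq_left (hε0 a)]
    ring
  have hb' := hb c c
  rw [hbeq, hdiag, hdiag] at hb'
  have hεle : ε b₂ ≤ ε c := le_of_mul_le_mul_left hb' (by linarith : (0:ℝ) < 1 + ρ)
  rw [hbeq]
  by_contra hne
  exact absurd hεle (not_le.2 (hc b₂ hne))
end

section
/- In the line model with all pendant heights h_i = 0 (i.e., a weighted path embedded on ℝ): define, for real numbers x ≤ y, ε₂(x, y) = max{ε(x, V₁), ε(y, V₂)} where (V₁, V₂) = Π(x, y). If the pair (c₁′, c₂′) with c₁′ ≤ c₂′ minimizes ε₂ over all pairs (x, y) with x ≤ y, then there exists a pair (c₁, c₂) with c₁ ≤ c₂ that also minimizes ε₂ over all such pairs and moreover satisfies ε(c₁, V₁) = ε(c₂, V₂), where (V₁, V₂) = Π(c₁, c₂). -/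
open Finset

open scoped Classical in
/-- In the line model with all pendant heights zero, if `(c₁', c₂')` minimizes
`ε₂` over all ordered pairs, then there is a minimizing pair `(c₁, c₂)` with balanced
eccentricities on the two sides of the partition. -/
theorem exists_balanced_two_center_on_line
    {I : Type*} [Fintype I] [Nonempty I]
    (w : I → ℝ) (hw : ∀ i, 0 < w i) (a : I → ℝ)
    (f : I → ℝ → ℝ) (hf : ∀ i x, f i x = w i * |x - a i|)
    (εU : ℝ → Finset I → ℝ)
    (hεU : ∀ x U, εU x U = U.fold max 0 (fun i => f i x))
    (ε₂ : ℝ → ℝ → ℝ)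
    (hε₂ : ∀ x y, ε₂ x y =
      max (εU x (univ.filter (fun i => |x - a i| ≤ |y - a i|)))
          (εU y (univ.filter (fun i => ¬ |x - a i| ≤ |y - a i|))))
    (c₁' c₂' : ℝ) (hord : c₁' ≤ c₂')
    (hmin : ∀ x y : ℝ, x ≤ y → ε₂ c₁' c₂' ≤ ε₂ x y) :
    ∃ c₁ c₂ : ℝ, c₁ ≤ c₂ ∧ (∀ x y : ℝ, x ≤ y → ε₂ c₁ c₂ ≤ ε₂ x y) ∧
      εU c₁ (univ.filter (fun i => |c₁ - a i| ≤ |c₂ - a i|)) =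
      εU c₂ (univ.filter (fun i => ¬ |c₁ - a i| ≤ |c₂ - a i|)) := by
  have hwne : ∀ i : I, w i ≠ 0 := fun i => ne_of_gt (hw i)
  obtain ⟨m, hm⟩ : ∃ m : ℝ, m = ε₂ c₁' c₂' := ⟨_, rfl⟩
  -- basic fold facts
  have hfold_le : ∀ (x : ℝ) (U : Finset I) (M : ℝ), 0 ≤ M → (∀ i ∈ U, f i x ≤ M) →
      εU x U ≤ M := by
    intro x U M hM h
    rw [hεU]
    exact (Finset.fold_max_le _).2 ⟨hM, h⟩
  have hle_fold : ∀ (x : ℝ) (U : Finset I) (i : I), i ∈ U → f i x ≤ εU x U := by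
    intro x U i hi
    rw [hεU]
    exact (Finset.le_fold_max _).2 (Or.inr ⟨i, hi, le_rfl⟩)
  have hfold_nonneg : ∀ (x : ℝ) (U : Finset I), 0 ≤ εU x U := by
    intro x U
    rw [hεU]
    exact (Finset.le_fold_max _).2 (Or.inl le_rfl)
  have hm0 : 0 ≤ m := by
    rw [hm, hε₂]
    exact le_trans (hfold_nonneg _ _) (le_max_left _ _)
  have hmono : ∀ (i : I) (x y : ℝ), |x - a i| ≤ |y - a i| → f i x ≤ f i y := by
    intro i x y h
    rw [hf, hf]
    exact mul_le_mul_of_nonneg_left h (hw i).le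
  -- the optimal pair covers everything within m
  have hcov : ∀ i : I, f i c₁' ≤ m ∨ f i c₂' ≤ m := by
    intro i
    by_cases h : |c₁' - a i| ≤ |c₂' - a i|
    · left
      have hmem : i ∈ Finset.univ.filter (fun j => |c₁' - a j| ≤ |c₂' - a j|) :=
        mem_filter.2 ⟨mem_univ _, h⟩
      refine le_trans (hle_fold c₁' _ i hmem) ?_
      rw [hm, hε₂]
      exact le_max_left _ _
    · right
      have hmem : i ∈ Finset.univ.filter (fun j => ¬ |c₁' - a j| ≤ |c₂' - a j|) :=
        mem_filter.2 ⟨mem_univ _, h⟩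
      refine le_trans (hle_fold c₂' _ i hmem) ?_
      rw [hm, hε₂]
      exact le_max_right _ _
  rcases eq_or_lt_of_le hm0 with hm_eq | hm_pos
  · -- m = 0 : the original pair is already balanced
    refine ⟨c₁', c₂', hord, hmin, ?_⟩
    have h1 : εU c₁' (univ.filter (fun i => |c₁' - a i| ≤ |c₂' - a i|)) = 0 := by
      refine le_antisymm (hfold_le _ _ 0 le_rfl ?_) (hfold_nonneg _ _)
      intro i hi
      have hV := (mem_filter.1 hi).2
      rcases hcov i with h | h
      · rw [← hm_eq] at h; exact h
      · rw [← hm_eq] at h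
        exact le_trans (hmono i c₁' c₂' hV) h
    have h2 : εU c₂' (univ.filter (fun i => ¬ |c₁' - a i| ≤ |c₂' - a i|)) = 0 := by
      refine le_antisymm (hfold_le _ _ 0 le_rfl ?_) (hfold_nonneg _ _)
      intro i hi
      have hV := (mem_filter.1 hi).2
      have hV' : |c₂' - a i| ≤ |c₁' - a i| := le_of_not_ge hV
      rcases hcov i with h | h
      · rw [← hm_eq] at h
        exact le_trans (hmono i c₂' c₁' hV') h
      · rw [← hm_eq] at h; exact h
    rw [h1, h2]
  · -- m > 0 : greedy construction
    obtain ⟨iW, _, hiW⟩ := Finset.exists_max_image Finset.univ w univ_nonempty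
    obtain ⟨im, _, him⟩ := Finset.exists_min_image Finset.univ w univ_nonempty
    obtain ⟨i₁, -, hi₁⟩ :=
      Finset.exists_min_image Finset.univ (fun i => a i + m / w i) univ_nonempty
    obtain ⟨c₁, hc₁⟩ : ∃ c : ℝ, c = a i₁ + m / w i₁ := ⟨_, rfl⟩
    have hc₁min : ∀ j : I, c₁ ≤ a j + m / w j := by
      intro j; rw [hc₁]; exact hi₁ j (mem_univ _)
    obtain ⟨R, hR⟩ : ∃ R : Finset I,
        R = Finset.univ.filter (fun i => m < w i * |c₁ - a i|) := ⟨_, rfl⟩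
    have hRmem : ∀ i : I, i ∈ R ↔ m < w i * |c₁ - a i| := by
      intro i; rw [hR, mem_filter]; simp
    -- R is nonempty, otherwise a small symmetric perturbation beats m
    have hRne : R.Nonempty := by
      by_contra hRe
      rw [Finset.not_nonempty_iff_eq_empty] at hRe
      have hall : ∀ i : I, w i * |c₁ - a i| ≤ m := by
        intro i
        by_contra hlt
        push_neg at hlt
        have : i ∈ R := (hRmem i).2 hlt
        rw [hRe] at this
        exact absurd this (notMem_empty i)
      obtain ⟨δ, hδ⟩ : ∃ d : ℝ, d = m / (2 * w iW) := ⟨_, rfl⟩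
      have hWpos : 0 < w iW := hw iW
      have hδpos : 0 < δ := by
        rw [hδ]; exact div_pos hm_pos (by positivity)
      have hWδ : w iW * δ = m / 2 := by
        rw [hδ]; field_simp
      obtain ⟨M', hM'⟩ : ∃ M : ℝ, M = max (m - w im * δ) (m / 2) := ⟨_, rfl⟩
      have hM'lt : M' < m := by
        rw [hM']
        apply max_lt
        · linarith [mul_pos (hw im) hδpos]
        · linarith
      have hM'0 : 0 ≤ M' := by
        rw [hM']
        exact le_trans (by linarith) (le_max_right _ _)
      -- bound for points on the left of c₁
      have hboundL : ∀ i : I, a i ≤ c₁ → f i (c₁ - δ) ≤ M' := by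
        intro i hai
        rw [hf]
        have hfa : w i * (c₁ - a i) ≤ m := by
          have := hall i
          rwa [abs_of_nonneg (by linarith)] at this
        rcases le_or_gt (a i) (c₁ - δ) with h | h
        · have h4 : w im * δ ≤ w i * δ :=
            mul_le_mul_of_nonneg_right (him i (mem_univ i)) hδpos.le
          rw [abs_of_nonneg (by linarith)]
          have hle : w i * (c₁ - δ - a i) ≤ m - w im * δ := by nlinarith
          rw [hM']
          exact le_trans hle (le_max_left _ _)
        · have h4 : w i * δ ≤ w iW * δ :=
            mul_le_mul_of_nonneg_right (hiW i (mem_univ i)) hδpos.le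
          rw [abs_of_neg (by linarith)]
          have h5 : w i * -(c₁ - δ - a i) ≤ w i * δ :=
            mul_le_mul_of_nonneg_left (by linarith) (hw i).le
          have hle : w i * -(c₁ - δ - a i) ≤ m / 2 := by linarith
          rw [hM']
          exact le_trans hle (le_max_right _ _)
      -- bound for points on the right of c₁
      have hboundR : ∀ i : I, c₁ ≤ a i → f i (c₁ + δ) ≤ M' := by
        intro i hai
        rw [hf]
        have hfa : w i * (a i - c₁) ≤ m := by
          have h0 := hall i
          rcases eq_or_lt_of_le hai with h | h
          · rw [← h]
            simpa using hm0
          · rw [abs_of_neg (by linarith)] at h0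
            nlinarith [h0]
        rcases le_or_gt (c₁ + δ) (a i) with h | h
        · have h4 : w im * δ ≤ w i * δ :=
            mul_le_mul_of_nonneg_right (him i (mem_univ i)) hδpos.le
          rw [abs_of_nonpos (by linarith)]
          have hle : w i * -(c₁ + δ - a i) ≤ m - w im * δ := by nlinarith
          rw [hM']
          exact le_trans hle (le_max_left _ _)
        · have h4 : w i * δ ≤ w iW * δ :=
            mul_le_mul_of_nonneg_right (hiW i (mem_univ i)) hδpos.le
          rw [abs_of_nonneg (by linarith)]
          have h5 : w i * (c₁ + δ - a i) ≤ w i * δ :=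
            mul_le_mul_of_nonneg_left (by linarith) (hw i).le
          have hle : w i * (c₁ + δ - a i) ≤ m / 2 := by linarith
          rw [hM']
          exact le_trans hle (le_max_right _ _)
      have key : ε₂ (c₁ - δ) (c₁ + δ) ≤ M' := by
        rw [hε₂]
        refine max_le (hfold_le _ _ _ hM'0 ?_) (hfold_le _ _ _ hM'0 ?_)
        · intro i hi
          have hV := (mem_filter.1 hi).2
          have hai : a i ≤ c₁ := by
            have h2 := mul_self_le_mul_self (abs_nonneg (c₁ - δ - a i)) hV
            rw [abs_mul_abs_self, abs_mul_abs_self] at h2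
            nlinarith
          exact hboundL i hai
        · intro i hi
          have hV := (mem_filter.1 hi).2
          have hV' : |c₁ + δ - a i| < |c₁ - δ - a i| := lt_of_not_ge hV
          have hai : c₁ ≤ a i := by
            have h2 := mul_self_lt_mul_self (abs_nonneg (c₁ + δ - a i)) hV'
            rw [abs_mul_abs_self, abs_mul_abs_self] at h2
            nlinarith
          exact hboundR i hai
      have hge := hmin (c₁ - δ) (c₁ + δ) (by linarith)
      rw [← hm] at hge
      linarith
    obtain ⟨i₂, hi₂R, hi₂min⟩ :=
      Finset.exists_min_image R (fun i => a i + m / w i) hRne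
    obtain ⟨c₂, hc₂⟩ : ∃ c : ℝ, c = a i₂ + m / w i₂ := ⟨_, rfl⟩
    have hi₂' : m < w i₂ * |c₁ - a i₂| := (hRmem i₂).1 hi₂R
    have hc₁c₂ : c₁ ≤ c₂ := by rw [hc₂]; exact hc₁min i₂
    -- left-endpoint fact for members of R
    have hleft : ∀ i ∈ R, c₁ < a i - m / w i := by
      intro i hi
      have h1 := (hRmem i).1 hi
      have h2 := hc₁min i
      rcases le_or_gt (a i) c₁ with h | h
      · exfalso
        rw [abs_of_nonneg (by linarith)] at h1
        have h3 : w i * (c₁ - a i) ≤ w i * (m / w i) :=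
          mul_le_mul_of_nonneg_left (by linarith) (hw i).le
        have h4 : w i * (m / w i) = m := by
          rw [mul_comm]; exact div_mul_cancel₀ m (hwne i)
        linarith
      · rw [abs_of_neg (by linarith)] at h1
        have hlt : m / w i < a i - c₁ := by
          rw [div_lt_iff₀ (hw i)]; nlinarith [h1]
        linarith
    -- c₂ covers all of R (pigeonhole with three disjoint intervals)
    have hcovR : ∀ i ∈ R, a i - m / w i ≤ c₂ := by
      intro i hi
      by_contra hcon
      push_neg at hcon
      have hb : ∀ (j : I) (p : ℝ), f j p ≤ m → a j - m / w j ≤ p ∧ p ≤ a j + m / w j := by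
        intro j p hp
        rw [hf] at hp
        have h1 : |p - a j| ≤ m / w j := by
          rw [le_div_iff₀ (hw j)]; nlinarith [hp]
        rw [abs_le] at h1
        constructor <;> [linarith [h1.1]; linarith [h1.2]]
      have e2 := hleft i₂ hi₂R
      rcases hcov i₁ with h1 | h1 <;> rcases hcov i₂ with h2 | h2 <;>
        rcases hcov i with h3 | h3 <;>
      · obtain ⟨b11, b12⟩ := hb _ _ h1
        obtain ⟨b21, b22⟩ := hb _ _ h2
        obtain ⟨b31, b32⟩ := hb _ _ h3
        linarith [hc₁.ge, hc₁.le, hc₂.ge, hc₂.le]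
    have hc₂cov : ∀ i ∈ R, f i c₂ ≤ m := by
      intro i hi
      rw [hf]
      have hl := hcovR i hi
      have hr : c₂ ≤ a i + m / w i := by rw [hc₂]; exact hi₂min i hi
      have habs : |c₂ - a i| ≤ m / w i := abs_le.2 ⟨by linarith, by linarith⟩
      have h3 : w i * |c₂ - a i| ≤ w i * (m / w i) :=
        mul_le_mul_of_nonneg_left habs (hw i).le
      have h4 : w i * (m / w i) = m := by
        rw [mul_comm]; exact div_mul_cancel₀ m (hwne i)
      linarith
    have hc₁cov : ∀ i : I, i ∉ R → f i c₁ ≤ m := by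
      intro i hi
      rw [hf]
      by_contra h
      push_neg at h
      exact hi ((hRmem i).2 h)
    -- the new pair attains the optimum
    have hεle : ε₂ c₁ c₂ ≤ m := by
      rw [hε₂]
      refine max_le (hfold_le _ _ _ hm0 ?_) (hfold_le _ _ _ hm0 ?_)
      · intro i hi
        have hV := (mem_filter.1 hi).2
        by_cases hiR : i ∈ R
        · exact le_trans (hmono i c₁ c₂ hV) (hc₂cov i hiR)
        · exact hc₁cov i hiR
      · intro i hi
        have hV' : |c₂ - a i| ≤ |c₁ - a i| := le_of_not_ge (mem_filter.1 hi).2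
        by_cases hiR : i ∈ R
        · exact hc₂cov i hiR
        · exact le_trans (hmono i c₂ c₁ hV') (hc₁cov i hiR)
    have hεge : m ≤ ε₂ c₁ c₂ := by
      rw [hm]; exact hmin c₁ c₂ hc₁c₂
    have hεeq : ε₂ c₁ c₂ = m := le_antisymm hεle hεge
    -- the witnesses attaining m on each side
    have hdiv₁ : (0:ℝ) ≤ m / w i₁ := div_nonneg hm0 (hw i₁).le
    have hdiv₂ : (0:ℝ) ≤ m / w i₂ := div_nonneg hm0 (hw i₂).le
    have hc₁a : c₁ - a i₁ = m / w i₁ := by rw [hc₁]; ring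
    have hc₂a : c₂ - a i₂ = m / w i₂ := by rw [hc₂]; ring
    have hf₁ : f i₁ c₁ = m := by
      rw [hf, hc₁a, abs_of_nonneg hdiv₁, mul_comm]
      exact div_mul_cancel₀ m (hwne i₁)
    have hf₂ : f i₂ c₂ = m := by
      rw [hf, hc₂a, abs_of_nonneg hdiv₂, mul_comm]
      exact div_mul_cancel₀ m (hwne i₂)
    have hi₁V₁ : |c₁ - a i₁| ≤ |c₂ - a i₁| := by
      rw [abs_of_nonneg (by linarith), abs_of_nonneg (by linarith)]
      linarith
    have hi₂V₂ : ¬ |c₁ - a i₂| ≤ |c₂ - a i₂| := by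
      push_neg
      have h1 : m / w i₂ < |c₁ - a i₂| := by
        rw [div_lt_iff₀ (hw i₂)]; nlinarith [hi₂']
      rw [hc₂a, abs_of_nonneg hdiv₂]
      exact h1
    refine ⟨c₁, c₂, hc₁c₂, ?_, ?_⟩
    · intro x y hxy
      rw [hεeq, hm]
      exact hmin x y hxy
    · have hεle' := hεle
      rw [hε₂] at hεle'
      have hS1le : εU c₁ (univ.filter (fun i => |c₁ - a i| ≤ |c₂ - a i|)) ≤ m :=
        le_trans (le_max_left _ _) hεle'
      have hS2le : εU c₂ (univ.filter (fun i => ¬ |c₁ - a i| ≤ |c₂ - a i|)) ≤ m :=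
        le_trans (le_max_right _ _) hεle'
      have hmem₁ : i₁ ∈ Finset.univ.filter (fun i => |c₁ - a i| ≤ |c₂ - a i|) :=
        mem_filter.2 ⟨mem_univ _, hi₁V₁⟩
      have hmem₂ : i₂ ∈ Finset.univ.filter (fun i => ¬ |c₁ - a i| ≤ |c₂ - a i|) :=
        mem_filter.2 ⟨mem_univ _, hi₂V₂⟩
      have hS1ge : m ≤ εU c₁ (univ.filter (fun i => |c₁ - a i| ≤ |c₂ - a i|)) := by
        have := hle_fold c₁ _ i₁ hmem₁
        rwa [hf₁] at this
      have hS2ge : m ≤ εU c₂ (univ.filter (fun i => ¬ |c₁ - a i| ≤ |c₂ - a i|)) := by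
        have := hle_fold c₂ _ i₂ hmem₂
        rwa [hf₂] at this
      exact (le_antisymm hS1le hS1ge).trans (le_antisymm hS2le hS2ge).symm
end

section
/- In the line model: let c₁ < c₂ be real numbers and (V₁, V₂) = Π(c₁, c₂). If E_L(c₁) = ε(c₁, V₁), E_R(c₂) = ε(c₂, V₂), and ε(c₁, V₁) = ε(c₂, V₂), then both E_L and E_R are continuous on the closed interval [c₁, c₂]. -/
/-!
On `[c₁, c₂]` the left envelope equals `max r (max_i w_i (x - a_i + h_i))` with `r = E_L(c₁)`,
a maximum of continuous functions. Indeed a vertex with `a_i ≤ x` contributes the same value to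
both sides; a vertex with `a_i > x` is invisible to `E_L(x)`, but its affine extension at `x` is
below both `f_i(c₁)` and `f_i(c₂)`, one of which is at most `r` by the balance condition, while
`r ≤ E_L(x)` by monotonicity. The right envelope is the left envelope of the mirrored instance.
-/

open Finset

theorem Continuous.finset_fold_max {ι X α : Type*} [TopologicalSpace X] [LinearOrder α]
    [TopologicalSpace α] [OrderClosedTopology α] (s : Finset ι) (b : α) {g : ι → X → α}
    (hg : ∀ i, Continuous (g i)) :
    Continuous fun x => s.fold max b fun i => g i x := by
  classical
  induction s using Finset.induction with
  | empty => exact continuous_const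
  | insert _ _ hi ih =>
    simp only [Finset.fold_insert hi]
    exact (hg _).max ih

namespace LineModel

variable {I : Type*} [Fintype I] (w a h : I → ℝ)

open scoped Classical in
noncomputable def leftEnvelope (x : ℝ) : ℝ :=
  (univ.filter fun i => a i ≤ x).fold max 0 fun i => w i * (|x - a i| + h i)

noncomputable def rayMax (x : ℝ) : ℝ :=
  univ.fold max 0 fun i => w i * (x - a i + h i)

variable {w a h}

theorem continuous_rayMax : Continuous (rayMax w a h) :=
  Continuous.finset_fold_max _ _ fun _ => by fun_prop

theorem leftEnvelope_nonneg (x : ℝ) : 0 ≤ leftEnvelope w a h x :=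
  (le_fold_max _).2 (Or.inl le_rfl)

theorem cost_le_leftEnvelope {i : I} {x : ℝ} (hi : a i ≤ x) :
    w i * (|x - a i| + h i) ≤ leftEnvelope w a h x := by
  classical
  exact (le_fold_max _).2 (Or.inr ⟨i, by simpa using hi, le_rfl⟩)

theorem leftEnvelope_mono (hw : ∀ i, 0 ≤ w i) : Monotone (leftEnvelope w a h) := by
  intro x y hxy
  refine (fold_max_le _).2 ⟨leftEnvelope_nonneg y, fun i hi => ?_⟩
  have hax : a i ≤ x := (mem_filter.1 hi).2
  calc w i * (|x - a i| + h i) ≤ w i * (|y - a i| + h i) := by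
        rw [abs_of_nonneg (sub_nonneg.2 hax), abs_of_nonneg (by linarith)]
        gcongr
        exact hw i
    _ ≤ leftEnvelope w a h y := cost_le_leftEnvelope (hax.trans hxy)

theorem leftEnvelope_le_rayMax (x : ℝ) : leftEnvelope w a h x ≤ rayMax w a h x := by
  refine (fold_max_le _).2 ⟨(le_fold_max _).2 (Or.inl le_rfl), fun i hi => ?_⟩
  rw [abs_of_nonneg (sub_nonneg.2 (mem_filter.1 hi).2)]
  exact (le_fold_max _).2 (Or.inr ⟨i, mem_univ i, le_rfl⟩)

theorem leftEnvelope_eq_max_rayMax (hw : ∀ i, 0 ≤ w i) {c₁ c₂ x : ℝ}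
    (hcover : ∀ i, w i * (|c₁ - a i| + h i) ≤ leftEnvelope w a h c₁ ∨
      w i * (|c₂ - a i| + h i) ≤ leftEnvelope w a h c₁)
    (hx : x ∈ Set.Icc c₁ c₂) :
    leftEnvelope w a h x = max (leftEnvelope w a h c₁) (rayMax w a h x) := by
  have hr : leftEnvelope w a h c₁ ≤ leftEnvelope w a h x := leftEnvelope_mono hw hx.1
  refine le_antisymm (le_max_of_le_right (leftEnvelope_le_rayMax x)) (max_le hr ?_)
  refine (fold_max_le _).2 ⟨leftEnvelope_nonneg x, fun i _ => ?_⟩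
  by_cases hax : a i ≤ x
  · rw [← abs_of_nonneg (sub_nonneg.2 hax)]
    exact cost_le_leftEnvelope hax
  · refine le_trans ?_ hr
    rcases hcover i with hc₁ | hc₂
    · refine le_trans (mul_le_mul_of_nonneg_left ?_ (hw i)) hc₁
      linarith [abs_nonneg (c₁ - a i)]
    · refine le_trans (mul_le_mul_of_nonneg_left ?_ (hw i)) hc₂
      linarith [le_abs_self (c₂ - a i), hx.2]

theorem continuousOn_leftEnvelope (hw : ∀ i, 0 ≤ w i) {c₁ c₂ : ℝ}
    (hcover : ∀ i, w i * (|c₁ - a i| + h i) ≤ leftEnvelope w a h c₁ ∨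
      w i * (|c₂ - a i| + h i) ≤ leftEnvelope w a h c₁) :
    ContinuousOn (leftEnvelope w a h) (Set.Icc c₁ c₂) :=
  (continuous_const.max continuous_rayMax).continuousOn.congr fun _ hx =>
    leftEnvelope_eq_max_rayMax hw hcover hx

open scoped Classical in
theorem rightEnvelope_eq_leftEnvelope_neg (x : ℝ) :
    (univ.filter fun i => x ≤ a i).fold max 0 (fun i => w i * (|x - a i| + h i)) =
      leftEnvelope w (-a) h (-x) := by
  have hfilter : (univ.filter fun i => x ≤ a i) = univ.filter fun i => (-a) i ≤ -x :=
    filter_congr fun i _ => by simp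
  rw [leftEnvelope, hfilter]
  refine fold_congr fun i _ => ?_
  rw [Pi.neg_apply, neg_sub_neg, abs_sub_comm]

end LineModel

open LineModel

open scoped Classical in
theorem envelopes_continuous_on_line_general
    {I : Type*} [Fintype I]
    (w : I → ℝ) (hw : ∀ i, 0 < w i) (a h : I → ℝ)
    (f : I → ℝ → ℝ) (hf : ∀ i x, f i x = w i * (|x - a i| + h i))
    (εU : ℝ → Finset I → ℝ)
    (hεU : ∀ x U, εU x U = U.fold max 0 (fun i => f i x))
    (EL ER : ℝ → ℝ)
    (hEL : ∀ x, EL x = (univ.filter (fun i => a i ≤ x)).fold max 0 (fun i => f i x))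
    (hER : ∀ x, ER x = (univ.filter (fun i => x ≤ a i)).fold max 0 (fun i => f i x))
    (c₁ c₂ : ℝ)
    (V₁ : Finset I)
    (hL : EL c₁ = εU c₁ V₁)
    (hR : ER c₂ = εU c₂ (univ \ V₁))
    (hbal : εU c₁ V₁ = εU c₂ (univ \ V₁)) :
    ContinuousOn EL (Set.Icc c₁ c₂) ∧ ContinuousOn ER (Set.Icc c₁ c₂) := by
  obtain rfl : f = fun i x => w i * (|x - a i| + h i) := funext₂ hf
  have hw₀ : ∀ i, 0 ≤ w i := fun i => (hw i).le
  have hEL' : EL = leftEnvelope w a h := funext hEL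
  have hER' : ER = fun x => leftEnvelope w (-a) h (-x) :=
    funext fun x => (hER x).trans (rightEnvelope_eq_leftEnvelope_neg x)
  subst hEL' hER'
  have hcover : ∀ i, w i * (|c₁ - a i| + h i) ≤ εU c₁ V₁ ∨
      w i * (|c₂ - a i| + h i) ≤ εU c₁ V₁ := by
    intro i
    by_cases hi : i ∈ V₁
    · exact Or.inl <| hεU c₁ V₁ ▸ (le_fold_max _).2 (Or.inr ⟨i, hi, le_rfl⟩)
    · exact Or.inr <| hbal ▸ hεU c₂ _ ▸ (le_fold_max _).2 (Or.inr ⟨i, by simpa using hi, le_rfl⟩)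
  refine ⟨continuousOn_leftEnvelope hw₀ (hL ▸ hcover), ?_⟩
  have hcover' : ∀ i, w i * (|-c₂ - (-a) i| + h i) ≤ leftEnvelope w (-a) h (-c₂) ∨
      w i * (|-c₁ - (-a) i| + h i) ≤ leftEnvelope w (-a) h (-c₂) := by
    intro i
    rw [show leftEnvelope w (-a) h (-c₂) = εU c₁ V₁ from hR.trans hbal.symm, Pi.neg_apply, neg_sub_neg, neg_sub_neg, abs_sub_comm (a i), abs_sub_comm (a i)]
    exact (hcover i).symm
  exact (continuousOn_leftEnvelope hw₀ hcover').comp continuousOn_neg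
    fun x hx => ⟨neg_le_neg hx.2, neg_le_neg hx.1⟩

open scoped Classical in
/-- In the line model, under the stated balance conditions on the 2-center
`(c₁, c₂)`, the envelopes `E_L` and `E_R` are continuous on `[c₁, c₂]`. -/
theorem envelopes_continuous_on_line
    {I : Type*} [Fintype I] [Nonempty I]
    (w : I → ℝ) (hw : ∀ i, 0 < w i) (a h : I → ℝ) (hh : ∀ i, 0 ≤ h i)
    (f : I → ℝ → ℝ) (hf : ∀ i x, f i x = w i * (|x - a i| + h i))
    (εU : ℝ → Finset I → ℝ)
    (hεU : ∀ x U, εU x U = U.fold max 0 (fun i => f i x))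
    (EL ER : ℝ → ℝ)
    (hEL : ∀ x, EL x = (univ.filter (fun i => a i ≤ x)).fold max 0 (fun i => f i x))
    (hER : ∀ x, ER x = (univ.filter (fun i => x ≤ a i)).fold max 0 (fun i => f i x))
    (c₁ c₂ : ℝ) (hc : c₁ < c₂)
    (V₁ : Finset I)
    (hV₁ : V₁ = univ.filter (fun i => |c₁ - a i| + h i ≤ |c₂ - a i| + h i))
    (hL : EL c₁ = εU c₁ V₁)
    (hR : ER c₂ = εU c₂ (univ \ V₁))
    (hbal : εU c₁ V₁ = εU c₂ (univ \ V₁)) :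
    ContinuousOn EL (Set.Icc c₁ c₂) ∧ ContinuousOn ER (Set.Icc c₁ c₂) :=
  envelopes_continuous_on_line_general w hw a h f hf εU hεU EL ER hEL hER c₁ c₂ V₁ hL hR hbal
end

section
/- Let ρ ∈ (0, 1) and c₁ ≤ c ≤ c₂ be real numbers. Let L, R : ℝ → ℝ be functions such that: L and R are convex on [c₁, c₂]; L is nondecreasing on [c₁, c₂] and strictly increasing on [c₁, c]; R is nonincreasing on [c₁, c₂] and strictly decreasing on [c, c₂]. Let s : [c₁, c] → [c, c₂] be a map satisfying R(s(a)) = L(a) for every a ∈ [c₁, c], and define ψ₁(a) = (1 − ρ)·L(a) + ρ·(R(a) + L(s(a))) for a ∈ [c₁, c]. Then for all a₁ < a₂ < a₃ in [c₁, c]: (i) ψ₁(a₃) < ψ₁(a₂) implies ψ₁(a₂) < ψ₁(a₁); and (ii) ψ₁(a₁) < ψ₁(a₂) implies ψ₁(a₂) < ψ₁(a₃). (This is the strict quasiconvexity of the restricted backup 2-center objective ψ₁, where L and R play the roles of the left and right envelopes E_L and E_R on the path between the two centers, and s(a) = a* is the point with E_R(a*) = E_L(a).) -/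
set_option maxHeartbeats 1000000

/-- Product form of the slope inequality for a convex function. -/
lemma slope_prod {f : ℝ → ℝ} {S : Set ℝ} (hf : ConvexOn ℝ S f) {x y z : ℝ}
    (hx : x ∈ S) (hz : z ∈ S) (hxy : x < y) (hyz : y < z) :
    (f y - f x) * (z - y) ≤ (f z - f y) * (y - x) := by
  have h := hf.slope_mono_adjacent hx hz hxy hyz
  rw [div_le_div_iff₀ (by linarith) (by linarith)] at h
  linarith

/-- strict quasiconvexity of the restricted backup 2-center objective `ψ₁`. -/
theorem psi1_strictly_quasiconvex
    (ρ : ℝ) (hρ0 : 0 < ρ) (hρ1 : ρ < 1)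
    (c₁ c c₂ : ℝ) (hc₁ : c₁ ≤ c) (hc₂ : c ≤ c₂)
    (L R : ℝ → ℝ)
    (hLconv : ConvexOn ℝ (Set.Icc c₁ c₂) L)
    (hRconv : ConvexOn ℝ (Set.Icc c₁ c₂) R)
    (hLmono : MonotoneOn L (Set.Icc c₁ c₂))
    (hLstrict : StrictMonoOn L (Set.Icc c₁ c))
    (hRanti : AntitoneOn R (Set.Icc c₁ c₂))
    (hRstrict : StrictAntiOn R (Set.Icc c c₂))
    (s : ℝ → ℝ)
    (hs : ∀ a ∈ Set.Icc c₁ c, s a ∈ Set.Icc c c₂ ∧ R (s a) = L a)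
    (ψ₁ : ℝ → ℝ)
    (hψ₁ : ∀ a ∈ Set.Icc c₁ c, ψ₁ a = (1 - ρ) * L a + ρ * (R a + L (s a))) :
    ∀ a₁ ∈ Set.Icc c₁ c, ∀ a₂ ∈ Set.Icc c₁ c, ∀ a₃ ∈ Set.Icc c₁ c,
      a₁ < a₂ → a₂ < a₃ →
        (ψ₁ a₃ < ψ₁ a₂ → ψ₁ a₂ < ψ₁ a₁) ∧ (ψ₁ a₁ < ψ₁ a₂ → ψ₁ a₂ < ψ₁ a₃) := by
  intro a₁ h1 a₂ h2 a₃ h3 h12 h23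
  -- memberships in the large interval
  have sub1 : Set.Icc c₁ c ⊆ Set.Icc c₁ c₂ := Set.Icc_subset_Icc le_rfl hc₂
  have sub2 : Set.Icc c c₂ ⊆ Set.Icc c₁ c₂ := Set.Icc_subset_Icc hc₁ le_rfl
  have h1' := sub1 h1
  have h2' := sub1 h2
  have h3' := sub1 h3
  obtain ⟨hs1, hR1⟩ := hs a₁ h1
  obtain ⟨hs2, hR2⟩ := hs a₂ h2
  obtain ⟨hs3, hR3⟩ := hs a₃ h3
  have hs1' := sub2 hs1
  have hs2' := sub2 hs2
  have hs3' := sub2 hs3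
  -- strict increase of L
  have hL12 : L a₁ < L a₂ := hLstrict h1 h2 h12
  have hL23 : L a₂ < L a₃ := hLstrict h2 h3 h23
  -- ordering of the s-points
  have hs21 : s a₂ < s a₁ := by
    rcases lt_trichotomy (s a₂) (s a₁) with h | h | h
    · exact h
    · rw [h, hR1] at hR2; linarith
    · have := hRstrict hs1 hs2 h; rw [hR1, hR2] at this; linarith
  have hs32 : s a₃ < s a₂ := by
    rcases lt_trichotomy (s a₃) (s a₂) with h | h | h
    · exact h
    · rw [h, hR2] at hR3; linarith
    · have := hRstrict hs2 hs3 h; rw [hR2, hR3] at this; linarith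
  -- slope inequalities (product form)
  have hA : (L a₂ - L a₁) * (a₃ - a₂) ≤ (L a₃ - L a₂) * (a₂ - a₁) :=
    slope_prod hLconv h1' h3' h12 h23
  have hB : (R a₂ - R a₁) * (a₃ - a₂) ≤ (R a₃ - R a₂) * (a₂ - a₁) :=
    slope_prod hRconv h1' h3' h12 h23
  have hC : (R (s a₂) - R (s a₃)) * (s a₁ - s a₂) ≤ (R (s a₁) - R (s a₂)) * (s a₂ - s a₃) :=
    slope_prod hRconv hs3' hs1' hs32 hs21
  have hD : (L (s a₂) - L (s a₃)) * (s a₁ - s a₂) ≤ (L (s a₁) - L (s a₂)) * (s a₂ - s a₃) :=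
    slope_prod hLconv hs3' hs1' hs32 hs21
  rw [hR1, hR2, hR3] at hC
  -- sign facts
  have hR21 : R a₂ ≤ R a₁ := hRanti h1' h2' h12.le
  have hS21 : L (s a₂) ≤ L (s a₁) := hLmono hs2' hs1' hs21.le
  have hq : 0 < s a₁ - s a₂ := by linarith
  have hp : 0 < s a₂ - s a₃ := by linarith
  -- key cross inequalities
  have hdL1 : (0:ℝ) < L a₂ - L a₁ := by linarith
  have hdL2 : (0:ℝ) < L a₃ - L a₂ := by linarith
  have hda1 : (0:ℝ) < a₂ - a₁ := by linarith
  have hRkey : (L a₃ - L a₂) * (R a₂ - R a₁) ≤ (L a₂ - L a₁) * (R a₃ - R a₂) := by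
    have h₁ := mul_le_mul_of_nonneg_left hB hdL1.le
    have h₂ := mul_le_mul_of_nonpos_left hA (by linarith : R a₂ - R a₁ ≤ 0)
    have h₃ : (L a₃ - L a₂) * (R a₂ - R a₁) * (a₂ - a₁) ≤
        (L a₂ - L a₁) * (R a₃ - R a₂) * (a₂ - a₁) := by nlinarith [h₁, h₂]
    exact le_of_mul_le_mul_right h₃ hda1
  have hSkey : (L a₃ - L a₂) * (L (s a₂) - L (s a₁)) ≤
      (L a₂ - L a₁) * (L (s a₃) - L (s a₂)) := by
    have h₁ := mul_le_mul_of_nonneg_left hD hdL1.le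
    have h₂ := mul_le_mul_of_nonneg_left hC (by linarith : (0:ℝ) ≤ L (s a₁) - L (s a₂))
    have h₃ : (L a₃ - L a₂) * (L (s a₂) - L (s a₁)) * (s a₁ - s a₂) ≤
        (L a₂ - L a₁) * (L (s a₃) - L (s a₂)) * (s a₁ - s a₂) := by nlinarith [h₁, h₂]
    exact le_of_mul_le_mul_right h₃ hq
  -- main inequality
  have hkey : (L a₃ - L a₂) * (ψ₁ a₂ - ψ₁ a₁) ≤ (L a₂ - L a₁) * (ψ₁ a₃ - ψ₁ a₂) := by
    have hh₁ := mul_le_mul_of_nonneg_left hRkey hρ0.le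
    have hh₂ := mul_le_mul_of_nonneg_left hSkey hρ0.le
    rw [hψ₁ a₁ h1, hψ₁ a₂ h2, hψ₁ a₃ h3]
    ring_nf
    ring_nf at hh₁ hh₂
    linarith [hh₁, hh₂]
  constructor
  · intro h
    by_contra hcon
    push_neg at hcon
    have h4 : (0:ℝ) ≤ (L a₃ - L a₂) * (ψ₁ a₂ - ψ₁ a₁) :=
      mul_nonneg hdL2.le (by linarith)
    have h5 : (L a₂ - L a₁) * (ψ₁ a₃ - ψ₁ a₂) < 0 :=
      mul_neg_of_pos_of_neg hdL1 (by linarith)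
    linarith
  · intro h
    have h4 : (0:ℝ) < (L a₃ - L a₂) * (ψ₁ a₂ - ψ₁ a₁) :=
      mul_pos hdL2 (by linarith)
    nlinarith
end

section
/- Let ρ ∈ (0, 1) and c₁ ≤ c ≤ c₂ be real numbers. Let L, R : ℝ → ℝ be functions such that: L and R are convex on [c₁, c₂]; L is nondecreasing on [c₁, c₂] and strictly increasing on [c₁, c]; R is nonincreasing on [c₁, c₂] and strictly decreasing on [c, c₂]. Let t : [c, c₂] → [c₁, c] be a map satisfying L(t(a)) = R(a) for every a ∈ [c, c₂], and define ψ₂(a) = (1 − ρ)·R(a) + ρ·(L(a) + R(t(a))) for a ∈ [c, c₂]. Then for all a₁ < a₂ < a₃ in [c, c₂]: (i) ψ₂(a₃) < ψ₂(a₂) implies ψ₂(a₂) < ψ₂(a₁); and (ii) ψ₂(a₁) < ψ₂(a₂) implies ψ₂(a₂) < ψ₂(a₃). (This is the strict quasiconvexity of the mirrored objective ψ₂(a) = ψ(a*, a), stated in the paper as holding in a symmetric manner.) -/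
set_option maxHeartbeats 1600000 in
/-- strict quasiconvexity of the mirrored objective `ψ₂`. -/
theorem psi2_strictly_quasiconvex
    (ρ : ℝ) (hρ0 : 0 < ρ) (hρ1 : ρ < 1)
    (c₁ c c₂ : ℝ) (hc₁ : c₁ ≤ c) (hc₂ : c ≤ c₂)
    (L R : ℝ → ℝ)
    (hLconv : ConvexOn ℝ (Set.Icc c₁ c₂) L)
    (hRconv : ConvexOn ℝ (Set.Icc c₁ c₂) R)
    (hLmono : MonotoneOn L (Set.Icc c₁ c₂))
    (hLstrict : StrictMonoOn L (Set.Icc c₁ c))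
    (hRanti : AntitoneOn R (Set.Icc c₁ c₂))
    (hRstrict : StrictAntiOn R (Set.Icc c c₂))
    (t : ℝ → ℝ)
    (ht : ∀ a ∈ Set.Icc c c₂, t a ∈ Set.Icc c₁ c ∧ L (t a) = R a)
    (ψ₂ : ℝ → ℝ)
    (hψ₂ : ∀ a ∈ Set.Icc c c₂, ψ₂ a = (1 - ρ) * R a + ρ * (L a + R (t a))) :
    ∀ a₁ ∈ Set.Icc c c₂, ∀ a₂ ∈ Set.Icc c c₂, ∀ a₃ ∈ Set.Icc c c₂,
      a₁ < a₂ → a₂ < a₃ →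
        (ψ₂ a₃ < ψ₂ a₂ → ψ₂ a₂ < ψ₂ a₁) ∧ (ψ₂ a₁ < ψ₂ a₂ → ψ₂ a₂ < ψ₂ a₃) := by
  intro a₁ h1 a₂ h2 a₃ h3 h12 h23
  obtain ⟨ht1, hLt1⟩ := ht a₁ h1
  obtain ⟨ht2, hLt2⟩ := ht a₂ h2
  obtain ⟨ht3, hLt3⟩ := ht a₃ h3
  have sub1 : ∀ x ∈ Set.Icc c c₂, x ∈ Set.Icc c₁ c₂ :=
    fun x hx => ⟨le_trans hc₁ hx.1, hx.2⟩
  have sub2 : ∀ x ∈ Set.Icc c₁ c, x ∈ Set.Icc c₁ c₂ :=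
    fun x hx => ⟨hx.1, le_trans hx.2 hc₂⟩
  have hA : R a₂ < R a₁ := hRstrict h1 h2 h12
  have hA' : R a₃ < R a₂ := hRstrict h2 h3 h23
  have ht21 : t a₂ < t a₁ :=
    (hLstrict.lt_iff_lt ht2 ht1).1 (by rw [hLt1, hLt2]; exact hA)
  have ht32 : t a₃ < t a₂ :=
    (hLstrict.lt_iff_lt ht3 ht2).1 (by rw [hLt2, hLt3]; exact hA')
  have hB : L a₁ ≤ L a₂ := hLmono (sub1 _ h1) (sub1 _ h2) h12.le
  have hB' : L a₂ ≤ L a₃ := hLmono (sub1 _ h2) (sub1 _ h3) h23.le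
  have hC : R (t a₁) ≤ R (t a₂) := hRanti (sub2 _ ht2) (sub2 _ ht1) ht21.le
  have hC' : R (t a₂) ≤ R (t a₃) := hRanti (sub2 _ ht3) (sub2 _ ht2) ht32.le
  have hα : (0:ℝ) < a₂ - a₁ := by linarith
  have hβ : (0:ℝ) < a₃ - a₂ := by linarith
  have hδ : (0:ℝ) < t a₁ - t a₂ := by linarith
  have hε : (0:ℝ) < t a₂ - t a₃ := by linarith
  have s1 := hLconv.slope_mono_adjacent (sub1 _ h1) (sub1 _ h3) h12 h23
  have s2 := hRconv.slope_mono_adjacent (sub1 _ h1) (sub1 _ h3) h12 h23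
  have s3 := hLconv.slope_mono_adjacent (sub2 _ ht3) (sub2 _ ht1) ht32 ht21
  have s4 := hRconv.slope_mono_adjacent (sub2 _ ht3) (sub2 _ ht1) ht32 ht21
  rw [div_le_div_iff₀ hα hβ] at s1 s2
  rw [div_le_div_iff₀ hε hδ] at s3 s4
  rw [hLt1, hLt2, hLt3] at s3
  -- s1 : (L a₂ - L a₁) * (a₃ - a₂) ≤ (L a₃ - L a₂) * (a₂ - a₁)
  -- s2 : (R a₂ - R a₁) * (a₃ - a₂) ≤ (R a₃ - R a₂) * (a₂ - a₁)
  -- s3 : (R a₂ - R a₃) * (t a₁ - t a₂) ≤ (R a₁ - R a₂) * (t a₂ - t a₃)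
  -- s4 : (R (t a₂) - R (t a₃)) * (t a₁ - t a₂) ≤ (R (t a₁) - R (t a₂)) * (t a₂ - t a₃)
  -- key cross inequalities
  have T1 : (R a₂ - R a₃) * (L a₂ - L a₁) ≤ (R a₁ - R a₂) * (L a₃ - L a₂) := by
    have hmm : ((R a₂ - R a₃) * (a₂ - a₁)) * ((L a₂ - L a₁) * (a₃ - a₂))
        ≤ ((R a₁ - R a₂) * (a₃ - a₂)) * ((L a₃ - L a₂) * (a₂ - a₁)) :=
      mul_le_mul (by nlinarith [s2]) s1 (mul_nonneg (by linarith) hβ.le)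
        (mul_nonneg (by linarith) hβ.le)
    have hpos : (0:ℝ) < (a₂ - a₁) * (a₃ - a₂) := mul_pos hα hβ
    exact le_of_mul_le_mul_right (by nlinarith [hmm]) hpos
  have T2 : (R a₂ - R a₃) * (R (t a₂) - R (t a₁)) ≤ (R a₁ - R a₂) * (R (t a₃) - R (t a₂)) := by
    have hmm : ((R a₂ - R a₃) * (t a₁ - t a₂)) * ((R (t a₂) - R (t a₁)) * (t a₂ - t a₃))
        ≤ ((R a₁ - R a₂) * (t a₂ - t a₃)) * ((R (t a₃) - R (t a₂)) * (t a₁ - t a₂)) :=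
      mul_le_mul s3 (by nlinarith [s4]) (mul_nonneg (by linarith) hε.le)
        (mul_nonneg (by linarith) hε.le)
    have hpos : (0:ℝ) < (t a₁ - t a₂) * (t a₂ - t a₃) := mul_pos hδ hε
    exact le_of_mul_le_mul_right (by nlinarith [hmm]) hpos
  -- main inequality: (R a₁ - R a₂) * D2 ≥ (R a₂ - R a₃) * D1
  set D1 : ℝ := ((1 - ρ) * R a₂ + ρ * (L a₂ + R (t a₂)))
      - ((1 - ρ) * R a₁ + ρ * (L a₁ + R (t a₁))) with hD1
  set D2 : ℝ := ((1 - ρ) * R a₃ + ρ * (L a₃ + R (t a₃)))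
      - ((1 - ρ) * R a₂ + ρ * (L a₂ + R (t a₂))) with hD2
  have main : (R a₂ - R a₃) * D1 ≤ (R a₁ - R a₂) * D2 := by
    rw [hD1, hD2]
    nlinarith [mul_nonneg hρ0.le (sub_nonneg.2 T1), mul_nonneg hρ0.le (sub_nonneg.2 T2)]
  rw [hψ₂ a₁ h1, hψ₂ a₂ h2, hψ₂ a₃ h3]
  constructor
  · intro h
    have hD2neg : D2 < 0 := by rw [hD2]; linarith
    have h1' : (R a₁ - R a₂) * D2 < 0 := mul_neg_of_pos_of_neg (by linarith) hD2neg
    have hD1neg : D1 < 0 := by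
      by_contra hcon
      push_neg at hcon
      have : 0 ≤ (R a₂ - R a₃) * D1 := mul_nonneg (by linarith) hcon
      linarith
    rw [hD1] at hD1neg; linarith
  · intro h
    have hD1pos : 0 < D1 := by rw [hD1]; linarith
    have h1' : 0 < (R a₂ - R a₃) * D1 := mul_pos (by linarith) hD1pos
    have hD2pos : 0 < D2 := by
      by_contra hcon
      push_neg at hcon
      have : (R a₁ - R a₂) * D2 ≤ 0 := mul_nonpos_of_nonneg_of_nonpos (by linarith) hcon
      linarith
    rw [hD2] at hD2pos; linarith
end

section
/- In the line model: if c ∈ ℝ minimizes the eccentricity ε(x) = max_{i ∈ I} f_i(x) over all of ℝ, then max_{i : a_i ≤ c} f_i(c) = ε(c) = max_{i : a_i ≥ c} f_i(c); in particular, there exist indices i, j ∈ I with a_i ≤ c ≤ a_j and f_i(c) = f_j(c) = ε(c), so that E_L(c) = ε(c) = E_R(c). -/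
open Finset

open scoped Classical in
/-- In the line model, at the weighted center `c` the left and right
envelopes both attain the eccentricity: `E_L(c) = ε(c) = E_R(c)`, witnessed by vertices
`i` with `a i ≤ c` and `j` with `c ≤ a j` whose cost at `c` equals `ε(c)`. -/
theorem envelopes_meet_at_center
    {I : Type*} [Fintype I] [Nonempty I]
    (w : I → ℝ) (hw : ∀ i, 0 < w i) (a h : I → ℝ) (hh : ∀ i, 0 ≤ h i)
    (f : I → ℝ → ℝ) (hf : ∀ i x, f i x = w i * (|x - a i| + h i))
    (ε : ℝ → ℝ)
    (hε : ∀ x, ε x = (univ : Finset I).sup' univ_nonempty (fun i => f i x))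
    (EL ER : ℝ → ℝ)
    (hEL : ∀ x, EL x = (univ.filter (fun i => a i ≤ x)).fold max 0 (fun i => f i x))
    (hER : ∀ x, ER x = (univ.filter (fun i => x ≤ a i)).fold max 0 (fun i => f i x))
    (c : ℝ) (hc : ∀ x : ℝ, ε c ≤ ε x) :
    EL c = ε c ∧ ε c = ER c ∧
      (∃ i : I, a i ≤ c ∧ f i c = ε c) ∧ (∃ j : I, c ≤ a j ∧ f j c = ε c) := by
  have hfle : ∀ i, f i c ≤ ε c := by
    intro i; rw [hε]; exact Finset.le_sup' (fun j => f j c) (mem_univ i)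
  have hεnn : 0 ≤ ε c := by
    obtain ⟨i⟩ := ‹Nonempty I›
    refine le_trans ?_ (hfle i)
    rw [hf]
    have := hw i
    have := hh i
    have := abs_nonneg (c - a i)
    positivity
  -- left existence
  have hexL : ∃ i, a i ≤ c ∧ f i c = ε c := by
    by_contra hno
    push_neg at hno
    have hlt : ∀ i, a i ≤ c → f i c < ε c := fun i hi =>
      lt_of_le_of_ne (hfle i) (hno i hi)
    set g : I → ℝ := fun i => if a i ≤ c then (ε c - f i c) / (w i) else a i - c with hg
    have hgpos : ∀ i, 0 < g i := by
      intro i; rw [hg]; dsimp only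
      split_ifs with hi
      · exact div_pos (sub_pos.mpr (hlt i hi)) (hw i)
      · linarith [not_le.mp hi]
    set m := (univ : Finset I).inf' univ_nonempty g with hm
    have hmpos : 0 < m := by
      rw [hm, Finset.lt_inf'_iff]
      exact fun i _ => hgpos i
    set δ := m / 2 with hδ
    have hδpos : 0 < δ := half_pos hmpos
    have hδlt : ∀ i, δ < g i := fun i =>
      lt_of_lt_of_le (half_lt_self hmpos) (Finset.inf'_le _ (mem_univ i))
    have key : ε (c + δ) < ε c := by
      rw [hε]
      rw [Finset.sup'_lt_iff]
      intro i _
      by_cases hi : a i ≤ c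
      · have hgi := hδlt i
        rw [hg] at hgi; simp only [if_pos hi] at hgi
        have h1 : δ * w i < ε c - f i c := (lt_div_iff₀ (hw i)).mp hgi
        rw [hf, abs_of_nonneg (by linarith : (0:ℝ) ≤ c + δ - a i)]
        rw [hf, abs_of_nonneg (by linarith : (0:ℝ) ≤ c - a i)] at h1
        nlinarith [hw i]
      · have hgi := hδlt i
        rw [hg] at hgi; simp only [if_neg hi] at hgi
        push_neg at hi
        have hfc := hfle i
        rw [hf, abs_of_nonpos (by linarith : c + δ - a i ≤ 0)]
        rw [hf, abs_of_nonpos (by linarith : c - a i ≤ 0)] at hfc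
        nlinarith [hw i]
    exact absurd (hc (c + δ)) (not_le.mpr key)
  -- right existence
  have hexR : ∃ j, c ≤ a j ∧ f j c = ε c := by
    by_contra hno
    push_neg at hno
    have hlt : ∀ i, c ≤ a i → f i c < ε c := fun i hi =>
      lt_of_le_of_ne (hfle i) (hno i hi)
    set g : I → ℝ := fun i => if c ≤ a i then (ε c - f i c) / (w i) else c - a i with hg
    have hgpos : ∀ i, 0 < g i := by
      intro i; rw [hg]; dsimp only
      split_ifs with hi
      · exact div_pos (sub_pos.mpr (hlt i hi)) (hw i)
      · linarith [not_le.mp hi]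
    set m := (univ : Finset I).inf' univ_nonempty g with hm
    have hmpos : 0 < m := by
      rw [hm, Finset.lt_inf'_iff]
      exact fun i _ => hgpos i
    set δ := m / 2 with hδ
    have hδpos : 0 < δ := half_pos hmpos
    have hδlt : ∀ i, δ < g i := fun i =>
      lt_of_lt_of_le (half_lt_self hmpos) (Finset.inf'_le _ (mem_univ i))
    have key : ε (c - δ) < ε c := by
      rw [hε]
      rw [Finset.sup'_lt_iff]
      intro i _
      by_cases hi : c ≤ a i
      · have hgi := hδlt i
        rw [hg] at hgi; simp only [if_pos hi] at hgi
        have h1 : δ * w i < ε c - f i c := (lt_div_iff₀ (hw i)).mp hgi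
        rw [hf, abs_of_nonpos (by linarith : c - δ - a i ≤ 0)]
        rw [hf, abs_of_nonpos (by linarith : c - a i ≤ 0)] at h1
        nlinarith [hw i]
      · have hgi := hδlt i
        rw [hg] at hgi; simp only [if_neg hi] at hgi
        push_neg at hi
        have hfc := hfle i
        rw [hf, abs_of_nonneg (by linarith : (0:ℝ) ≤ c - δ - a i)]
        rw [hf, abs_of_nonneg (by linarith : (0:ℝ) ≤ c - a i)] at hfc
        nlinarith [hw i]
    exact absurd (hc (c - δ)) (not_le.mpr key)
  obtain ⟨i0, hi0, hfi0⟩ := hexL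
  obtain ⟨j0, hj0, hfj0⟩ := hexR
  refine ⟨?_, ?_, ⟨i0, hi0, hfi0⟩, ⟨j0, hj0, hfj0⟩⟩
  · rw [hEL]
    apply le_antisymm
    · exact (Finset.fold_max_le _).mpr ⟨hεnn, fun i _ => hfle i⟩
    · exact (Finset.le_fold_max _).mpr (Or.inr ⟨i0, mem_filter.mpr ⟨mem_univ _, hi0⟩, hfi0.ge⟩)
  · rw [hER]
    apply le_antisymm
    · exact (Finset.le_fold_max _).mpr (Or.inr ⟨j0, mem_filter.mpr ⟨mem_univ _, hj0⟩, hfj0.ge⟩)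
    · exact (Finset.fold_max_le _).mpr ⟨hεnn, fun i _ => hfle i⟩
end

section
/- In the line model: the eccentricity function ε(x) = max_{i ∈ I} f_i(x) has exactly one minimizer over ℝ; that is, there exists a unique c ∈ ℝ such that ε(c) ≤ ε(x) for all x ∈ ℝ. (This is the uniqueness of the weighted center, for the case of a weighted path with pendant heights.) -/
open Finset

/-- In the line model, the eccentricity function has a unique minimizer
over `ℝ` (uniqueness of the weighted center). -/
theorem weighted_center_unique_on_line
    {I : Type*} [Fintype I] [Nonempty I]
    (w : I → ℝ) (hw : ∀ i, 0 < w i) (a h : I → ℝ) (hh : ∀ i, 0 ≤ h i)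
    (f : I → ℝ → ℝ) (hf : ∀ i x, f i x = w i * (|x - a i| + h i))
    (ε : ℝ → ℝ)
    (hε : ∀ x, ε x = (univ : Finset I).sup' univ_nonempty (fun i => f i x)) :
    ∃! c : ℝ, ∀ x : ℝ, ε c ≤ ε x := by
  -- continuity of ε
  have hεfun : ε = fun x => (univ : Finset I).sup' univ_nonempty (fun i => f i x) :=
    funext hε
  have hcont : Continuous ε := by
    rw [hεfun]
    exact Continuous.finset_sup'_apply univ_nonempty (fun i _ => by
      have : f i = fun x => w i * (|x - a i| + h i) := funext (hf i)
      rw [this]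
      fun_prop)
  -- ε x ≥ w i * |x - a i|
  have hlow : ∀ (i : I) (x : ℝ), w i * |x - a i| ≤ ε x := by
    intro i x
    rw [hε x]
    refine le_trans ?_ (Finset.le_sup' (fun i => f i x) (mem_univ i))
    rw [hf]
    nlinarith [abs_nonneg (x - a i), hh i, (hw i).le]
  obtain ⟨i0⟩ := ‹Nonempty I›
  set M : ℝ := ε (a i0) / w i0 + 1 with hM
  have hMpos : 0 < M := by
    have h0 : 0 ≤ ε (a i0) :=
      le_trans (mul_nonneg (hw i0).le (abs_nonneg _)) (hlow i0 (a i0))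
    have := div_nonneg h0 (hw i0).le
    rw [hM]; linarith
  -- existence of minimizer on compact interval
  obtain ⟨c, hcmem, hcmin⟩ := (isCompact_Icc (a := a i0 - M) (b := a i0 + M)).exists_isMinOn
    (Set.nonempty_Icc.2 (by linarith)) hcont.continuousOn
  have hcle : ε c ≤ ε (a i0) := hcmin (by constructor <;> linarith)
  have hmin : ∀ x : ℝ, ε c ≤ ε x := by
    intro x
    by_cases hx : x ∈ Set.Icc (a i0 - M) (a i0 + M)
    · exact hcmin hx
    · have hax : M < |x - a i0| := by
        simp only [Set.mem_Icc, not_and_or, not_le] at hx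
        rcases hx with hx | hx
        · rw [abs_sub_comm, abs_of_pos (by linarith)]; linarith
        · rw [abs_of_pos (by linarith)]; linarith
      have : ε (a i0) < ε x := by
        calc ε (a i0) < w i0 * M := by
              rw [hM]
              have := (hw i0)
              rw [mul_add, mul_div_cancel₀ _ (hw i0).ne', mul_one]
              linarith
          _ ≤ w i0 * |x - a i0| := by nlinarith [(hw i0)]
          _ ≤ ε x := hlow i0 x
      linarith
  refine ⟨c, hmin, ?_⟩
  -- uniqueness
  intro c' hmin'
  by_contra hne
  -- WLOG via general claim: for any two distinct minimizers p < q, contradiction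
  have key : ∀ p q : ℝ, p < q → (∀ x, ε p ≤ ε x) → (∀ x, ε q ≤ ε x) → False := by
    intro p q hpq hp hq
    have heq : ε p = ε q := le_antisymm (hp q) (hq p)
    set z := (p + q) / 2 with hz
    have hpz : p < z := by rw [hz]; linarith
    have hzq : z < q := by rw [hz]; linarith
    -- show ε z < ε p
    have : ε z < ε p := by
      rw [hε z]
      rw [Finset.sup'_lt_iff]
      intro i _
      have hstrict : |z - a i| < max |p - a i| |q - a i| := by
        rcases le_total z (a i) with hza | hza
        · have : |z - a i| = a i - z := by rw [abs_sub_comm, abs_of_nonneg (by linarith)]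
          rw [this]
          calc a i - z < a i - p := by linarith
            _ ≤ |p - a i| := by rw [abs_sub_comm]; exact le_abs_self _
            _ ≤ _ := le_max_left _ _
        · have : |z - a i| = z - a i := abs_of_nonneg (by linarith)
          rw [this]
          calc z - a i < q - a i := by linarith
            _ ≤ |q - a i| := le_abs_self _
            _ ≤ _ := le_max_right _ _
      have hfz : f i z < max (f i p) (f i q) := by
        rw [hf, hf, hf]
        rcases max_cases |p - a i| |q - a i| with ⟨he, _⟩ | ⟨he, _⟩
        · rw [he] at hstrict
          exact lt_max_of_lt_left (by nlinarith [hw i])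
        · rw [he] at hstrict
          exact lt_max_of_lt_right (by nlinarith [hw i])
      have h1 : f i p ≤ ε p := by
        rw [hε p]; exact Finset.le_sup' (fun i => f i p) (mem_univ i)
      have h2 : f i q ≤ ε q := by
        rw [hε q]; exact Finset.le_sup' (fun i => f i q) (mem_univ i)
      calc f i z < max (f i p) (f i q) := hfz
        _ ≤ ε p := max_le h1 (heq ▸ h2)
    exact absurd (hp z) (not_le.2 this)
  rcases lt_trichotomy c c' with hlt | heq | hgt
  · exact key c c' hlt hmin hmin'
  · exact hne heq.symm
  · exact key c' c hgt hmin' hmin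
end
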